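/- In the cascading-failure model with capacity margin α ≥ 0, suppose disc(G₀) = 0 (in the initial network every load node can reach a source) and let Pr_a be a probability distribution over attack strategies all of which are singletons {v} with v ∈ V. Then for every defense V_d ⊆ V, the expected payoff satisfies Σ_{v ∈ V} Pr_a({v})·p({v}, V_d) = Σ_{v ∈ V \ V_d} Pr_a({v})·p({v}, ∅). -/

import Mathlib

open scoped Classical

noncomputable section

variable {V : Type*} [Fintype V] [DecidableEq V]

/-- The number of shortest paths between `s` and `t` in `G` (σ_G(s,t)). -/
def numSP (G : SimpleGraph V) (s t : V) : ℕ :=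
  Nat.card {w : G.Walk s t // w.length = G.dist s t}

/-- The number of shortest paths between `s` and `t` in `G` passing through edge `e`
(σ_G(s,t | e)). -/
def numSPthru (G : SimpleGraph V) (s t : V) (e : Sym2 V) : ℕ :=
  Nat.card {w : G.Walk s t // w.length = G.dist s t ∧ e ∈ w.edges}

/-- `N_G(t)`: the vertices of `Vsrc \ {t}` reachable from `t` in `G` at minimum distance
from `t`. -/
def nearestSources (Vsrc : Finset V) (G : SimpleGraph V) (t : V) : Finset V :=
  ((Vsrc.erase t).filter (fun s => G.Reachable t s)).filter
    (fun s => ∀ s' ∈ (Vsrc.erase t).filter (fun s'' => G.Reachable t s''),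
      G.dist t s ≤ G.dist t s')

/-- The load of edge `e` in `G`:
`load_G(e) = Σ_{t ∈ Vld} Σ_{s ∈ N_G(t)} σ_G(s,t|e) / (|N_G(t)|·σ_G(s,t))`. -/
def eload (Vsrc Vld : Finset V) (G : SimpleGraph V) (e : Sym2 V) : ℝ :=
  ∑ t ∈ Vld, ∑ s ∈ nearestSources Vsrc G t,
    (numSPthru G s t e : ℝ) / (((nearestSources Vsrc G t).card : ℝ) * (numSP G s t : ℝ))

/-- The failure operator: removes every edge whose current load exceeds its capacity
`c_e = (1+α)·load_{G₀}(e)`. -/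
def Fop (Vsrc Vld : Finset V) (G0 : SimpleGraph V) (α : ℝ) (G : SimpleGraph V) :
    SimpleGraph V where
  Adj u v := G.Adj u v ∧ eload Vsrc Vld G s(u, v) ≤ (1 + α) * eload Vsrc Vld G0 s(u, v)
  symm := by
    refine ⟨?_⟩
    intro u v h
    refine ⟨h.1.symm, ?_⟩
    rw [Sym2.eq_swap]
    exact h.2
  loopless := ⟨fun v h => G.loopless.1 v h.1⟩

/-- `F*(G)`: the fixed point reached by iterating the failure operator (reached after at
most `|E|+1 ≤ (card V)^2` applications, since each non-trivial application removes an edge). -/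
def Fstar (Vsrc Vld : Finset V) (G0 : SimpleGraph V) (α : ℝ) (G : SimpleGraph V) :
    SimpleGraph V :=
  (Fop Vsrc Vld G0 α)^[Fintype.card V ^ 2] G

/-- `G − S`: the (induced) subgraph obtained by deleting the vertices of `S`. -/
def deleteVerts (G : SimpleGraph V) (S : Finset V) : SimpleGraph V where
  Adj u v := G.Adj u v ∧ u ∉ S ∧ v ∉ S
  symm := ⟨fun u v h => ⟨h.1.symm, h.2.2, h.2.1⟩⟩
  loopless := ⟨fun v h => G.loopless.1 v h.1⟩

/-- `disc(G)`: the number of load nodes from which no source (other than itself) is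
reachable in `G`. -/
def disc (Vsrc Vld : Finset V) (G : SimpleGraph V) : ℕ :=
  (Vld.filter (fun t => ∀ s ∈ Vsrc, s ≠ t → ¬ G.Reachable t s)).card

/-- The payoff `p(V_a,V_d) = disc(F*(G₀ − (V_a \ V_d)))`. -/
def payoff (Vsrc Vld : Finset V) (G0 : SimpleGraph V) (α : ℝ) (Va Vd : Finset V) : ℕ :=
  disc Vsrc Vld (Fstar Vsrc Vld G0 α (deleteVerts G0 (Va \ Vd)))

/-! A defended singleton attack deletes nothing, and `G₀` is a fixed point of the failure
operator because every load is nonnegative, so `load ≤ (1 + α)·load`; such an attack therefore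
scores `disc(G₀) = 0`. An undefended singleton attack is unaffected by the defense. -/

lemma eload_nonneg (Vsrc Vld : Finset V) (G : SimpleGraph V) (e : Sym2 V) :
    0 ≤ eload Vsrc Vld G e :=
  Finset.sum_nonneg fun _ _ => Finset.sum_nonneg fun _ _ => by positivity

lemma Fop_self {Vsrc Vld : Finset V} {G0 : SimpleGraph V} {α : ℝ} (hα : 0 ≤ α) :
    Fop Vsrc Vld G0 α G0 = G0 := by
  ext u v
  refine ⟨And.left, fun h => ⟨h, ?_⟩⟩
  nlinarith [eload_nonneg Vsrc Vld G0 s(u, v)]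

lemma Fstar_self {Vsrc Vld : Finset V} {G0 : SimpleGraph V} {α : ℝ} (hα : 0 ≤ α) :
    Fstar Vsrc Vld G0 α G0 = G0 :=
  Function.iterate_fixed (Fop_self hα) _

lemma deleteVerts_empty {W : Type*} (G : SimpleGraph W) : deleteVerts G ∅ = G := by
  ext u v
  simp [deleteVerts]

lemma payoff_of_subset {Vsrc Vld : Finset V} {G0 : SimpleGraph V} {α : ℝ} (hα : 0 ≤ α)
    {Va Vd : Finset V} (h : Va ⊆ Vd) : payoff Vsrc Vld G0 α Va Vd = disc Vsrc Vld G0 := by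
  rw [payoff, Finset.sdiff_eq_empty_iff_subset.2 h, deleteVerts_empty, Fstar_self hα]

lemma payoff_of_disjoint {Vsrc Vld : Finset V} {G0 : SimpleGraph V} {α : ℝ}
    {Va Vd : Finset V} (h : Disjoint Va Vd) :
    payoff Vsrc Vld G0 α Va Vd = payoff Vsrc Vld G0 α Va ∅ := by
  rw [payoff, payoff, Finset.sdiff_eq_self_of_disjoint h, Finset.sdiff_empty]

theorem expected_payoff_singleton_attacks_general {V : Type*} [Fintype V] [DecidableEq V]
    (G0 : SimpleGraph V) (Vsrc Vld : Finset V) (α : ℝ) (hα : 0 ≤ α)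
    (h0 : disc Vsrc Vld G0 = 0)
    (Pra : V → ℝ)
    (Vd : Finset V) :
    ∑ v : V, Pra v * (payoff Vsrc Vld G0 α {v} Vd : ℝ) =
      ∑ v ∈ Finset.univ \ Vd, Pra v * (payoff Vsrc Vld G0 α {v} ∅ : ℝ) := by
  rw [← Finset.sum_sdiff (Finset.subset_univ Vd)]
  have defended : ∑ v ∈ Vd, Pra v * (payoff Vsrc Vld G0 α {v} Vd : ℝ) = 0 :=
    Finset.sum_eq_zero fun v hv => by
      rw [payoff_of_subset hα (Finset.singleton_subset_iff.2 hv), h0, Nat.cast_zero, mul_zero]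
  rw [defended, add_zero]
  refine Finset.sum_congr rfl fun v hv => ?_
  rw [payoff_of_disjoint (Finset.disjoint_singleton_left.2 (Finset.mem_sdiff.1 hv).2)]

/-- In the cascading-failure model with capacity margin `α ≥ 0`, if `disc(G₀) = 0` and the
attacker plays a mixed strategy supported on singletons `{v}`, then for every defense
`V_d`, `Σ_{v ∈ V} Pr_a({v})·p({v},V_d) = Σ_{v ∈ V \ V_d} Pr_a({v})·p({v},∅)`. -/
theorem expected_payoff_singleton_attacks {V : Type*} [Fintype V] [DecidableEq V]
    (G0 : SimpleGraph V) (Vsrc Vld : Finset V) (α : ℝ) (hα : 0 ≤ α)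
    (h0 : disc Vsrc Vld G0 = 0)
    (Pra : V → ℝ) (hPra : ∀ v : V, 0 ≤ Pra v) (hsum : ∑ v : V, Pra v = 1)
    (Vd : Finset V) :
    ∑ v : V, Pra v * (payoff Vsrc Vld G0 α {v} Vd : ℝ) =
      ∑ v ∈ Finset.univ \ Vd, Pra v * (payoff Vsrc Vld G0 α {v} ∅ : ℝ) :=
  expected_payoff_singleton_attacks_general G0 Vsrc Vld α hα h0 Pra Vd

end
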